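/- Let M be a proper G-manifold and let X and Y be G-isomorphic equivariant vector fields on M. If m ∈ M is a G-stable relative equilibrium of X, then m is a G-stable relative equilibrium of Y. -/
import Mathlib


/-- Stability of a relative equilibrium modulo a set `S` of group elements. -/
def StableMod {α : Type*} [TopologicalSpace α] {Γ : Type*} [Group Γ] [MulAction Γ α]
    (S : Set Γ) (φ : ℝ × α → α) (A : Set (ℝ × α)) (x : α) : Prop :=
  ∀ U : Set α, IsOpen U → x ∈ U → (∀ g ∈ S, ∀ y ∈ U, g • y ∈ U) →
    ∃ O : Set α, IsOpen O ∧ x ∈ O ∧ O ⊆ U ∧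
      ∀ q ∈ O, ∀ t : ℝ, (t, q) ∈ A → φ (t, q) ∈ U

/-- Let `M` be a proper `G`-manifold and `X`, `Y` two `G`-isomorphic
equivariant vector fields on `M`, with maximal flows `φX`, `φY`.  By Lerman's theorem
(assumed, as in the paper) the two flows have the same domain `A` and are related by a
family of smooth maps `F : ℝ → M → G`.  If `m` is a `G`-stable relative equilibrium of
`X`, then it is a `G`-stable relative equilibrium of `Y`. -/
theorem isomorphic_fields_same_stability
    {M : Type*} [TopologicalSpace M]
    (G : Type*) [Group G] [TopologicalSpace G] [MulAction G M] [ContinuousSMul G M]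
    -- the action is proper
    (hproper : IsProperMap (fun p : G × M => (p.1 • p.2, p.2)))
    (φX φY : ℝ × M → M) (A : Set (ℝ × M))
    (F : ℝ → M → G)
    (hF : ∀ p ∈ A, φY p = F p.1 p.2 • φX p)
    (m : M)
    -- `m` is a relative equilibrium of `X`
    (hre : ∀ t : ℝ, (t, m) ∈ A → φX (t, m) ∈ MulAction.orbit G m)
    (hstab : StableMod (Set.univ : Set G) φX A m) :
    StableMod (Set.univ : Set G) φY A m := by
  intro U hU hmU hinv
  obtain ⟨O, hO, hmO, hOU, h⟩ := hstab U hU hmU hinv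
  exact ⟨O, hO, hmO, hOU, fun q hq t ht => by
    rw [hF (t, q) ht]
    exact hinv _ trivial _ (h q hq t ht)⟩
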